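/- arXiv:2109.02064 — 5 statements merged into one kernel-verified Lean document; each statement's English description precedes it below -/
import Mathlib

section
/- Degenerate Baillon–Haddad theorem, Lipschitz part (Lemma 2.3(ii)): Let x₁, x₂ ∈ H and let w₁, w₂ ∈ (ker Q)ᗮ satisfy Q w₁ = B x₁ and Q w₂ = B x₂ (so wᵢ is the pseudo-inverse image Q†(B xᵢ)). Then ν² · ⟪Q (w₁ − w₂), w₁ − w₂⟫ ≤ β² · ⟪Q (x₁ − x₂), x₁ − x₂⟫; in other words, ‖w₁ − w₂‖_Q ≤ (β/ν) ‖x₁ − x₂‖_Q, i.e. Q†B is Q-based (β/ν)-Lipschitz continuous. -/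
/-!
Put `w = w₁ - w₂` and `x = x₁ - x₂`, so that `Q w = B x₁ - B x₂`. The lower bound
`ν ‖w‖ ≤ ‖Q w‖` and cocoercivity of `B` give `ν ⟪Q w, w⟫ ≤ ‖Q w‖² ≤ β ⟪Q w, x⟫`, and the
Cauchy–Schwarz inequality for the semidefinite form `⟪Q ·, ·⟫` bounds the right-hand side by
`β ‖w‖_Q ‖x‖_Q`. Dividing by `‖w‖_Q` and squaring gives the claim.
-/

open RealInnerProductSpace

section

variable {H : Type*} [NormedAddCommGroup H] [InnerProductSpace ℝ H]

theorem mul_inner_le_norm_sq_of_mul_norm_le {ν : ℝ} (hν : 0 ≤ ν) {u w : H}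
    (h : ν * ‖w‖ ≤ ‖u‖) : ν * ⟪u, w⟫ ≤ ‖u‖ ^ 2 :=
  calc ν * ⟪u, w⟫ ≤ ν * (‖u‖ * ‖w‖) := by gcongr; exact real_inner_le_norm u w
    _ = ‖u‖ * (ν * ‖w‖) := by ring
    _ ≤ ‖u‖ * ‖u‖ := by gcongr
    _ = ‖u‖ ^ 2 := (sq _).symm

namespace LinearMap.IsPositive

variable {Q : H →ₗ[ℝ] H}

theorem inner_map_sq_le (hQ : Q.IsPositive) (x y : H) :
    ⟪Q x, y⟫ ^ 2 ≤ ⟪Q x, x⟫ * ⟪Q y, y⟫ := by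
  have hsymm : ⟪Q y, x⟫ = ⟪Q x, y⟫ := by rw [hQ.isSymmetric, real_inner_comm]
  have := BilinForm.apply_mul_apply_le_of_forall_zero_le ((innerₗ H).comp Q)
    hQ.inner_nonneg_left x y
  simpa only [comp_apply, innerₗ_apply_apply, hsymm, ← sq] using this

theorem sq_mul_inner_map_self_le {ν β : ℝ} (hQ : Q.IsPositive) (hν : 0 ≤ ν) {w x : H}
    (h : ν * ⟪Q w, w⟫ ≤ β * ⟪Q w, x⟫) : ν ^ 2 * ⟪Q w, w⟫ ≤ β ^ 2 * ⟪Q x, x⟫ := by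
  rcases (hQ.inner_nonneg_left w).eq_or_lt with hw | hw
  · rw [← hw, mul_zero]
    exact mul_nonneg (sq_nonneg β) (hQ.inner_nonneg_left x)
  · refine le_of_mul_le_mul_right ?_ hw
    calc ν ^ 2 * ⟪Q w, w⟫ * ⟪Q w, w⟫ = (ν * ⟪Q w, w⟫) ^ 2 := by ring
      _ ≤ (β * ⟪Q w, x⟫) ^ 2 := pow_le_pow_left₀ (mul_nonneg hν hw.le) h 2
      _ = β ^ 2 * ⟪Q w, x⟫ ^ 2 := by ring
      _ ≤ β ^ 2 * (⟪Q w, w⟫ * ⟪Q x, x⟫) := by gcongr; exact hQ.inner_map_sq_le w x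
      _ = β ^ 2 * ⟪Q x, x⟫ * ⟪Q w, w⟫ := by ring

end LinearMap.IsPositive

end

theorem stmt_1_general
    {H : Type*} [NormedAddCommGroup H] [InnerProductSpace ℝ H]
    (Q : H →L[ℝ] H)
    (hQsym : ∀ x y : H, ⟪Q x, y⟫ = ⟪x, Q y⟫)
    (hQpos : ∀ x : H, 0 ≤ ⟪Q x, x⟫)
    (ν : ℝ) (hν : 0 < ν)
    (hνQ : ∀ w ∈ (LinearMap.ker (Q : H →ₗ[ℝ] H))ᗮ, ν * ‖w‖ ≤ ‖Q w‖)
    (β : ℝ)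
    (B : H → H)
    (hB : ∀ x y : H, ‖B x - B y‖ ^ 2 ≤ β * ⟪B x - B y, x - y⟫)
    (x₁ x₂ w₁ w₂ : H)
    (hw₁ : w₁ ∈ (LinearMap.ker (Q : H →ₗ[ℝ] H))ᗮ) (hw₂ : w₂ ∈ (LinearMap.ker (Q : H →ₗ[ℝ] H))ᗮ)
    (hQw₁ : Q w₁ = B x₁) (hQw₂ : Q w₂ = B x₂) :
    ν ^ 2 * ⟪Q (w₁ - w₂), w₁ - w₂⟫ ≤ β ^ 2 * ⟪Q (x₁ - x₂), x₁ - x₂⟫ := by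
  have hQ : (Q : H →ₗ[ℝ] H).IsPositive :=
    (LinearMap.isPositive_iff _).mpr ⟨hQsym, hQpos⟩
  have hQw : Q (w₁ - w₂) = B x₁ - B x₂ := by rw [map_sub, hQw₁, hQw₂]
  have hlower : ν * ‖w₁ - w₂‖ ≤ ‖Q (w₁ - w₂)‖ := hνQ _ (Submodule.sub_mem _ hw₁ hw₂)
  have hcocoercive : ‖Q (w₁ - w₂)‖ ^ 2 ≤ β * ⟪Q (w₁ - w₂), x₁ - x₂⟫ := hQw ▸ hB x₁ x₂
  exact hQ.sq_mul_inner_map_self_le hν.le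
    ((mul_inner_le_norm_sq_of_mul_norm_le hν.le hlower).trans hcocoercive)

/-- Degenerate Baillon–Haddad theorem, Lipschitz part (Lemma 2.3(ii)):
`Q†B` is `Q`-based `(β/ν)`-Lipschitz continuous. -/
theorem stmt_1
    {H : Type*} [NormedAddCommGroup H] [InnerProductSpace ℝ H] [CompleteSpace H]
    (Q : H →L[ℝ] H)
    (hQsym : ∀ x y : H, ⟪Q x, y⟫ = ⟪x, Q y⟫)
    (hQpos : ∀ x : H, 0 ≤ ⟪Q x, x⟫)
    (ν : ℝ) (hν : 0 < ν)
    (hνQ : ∀ w ∈ (LinearMap.ker (Q : H →ₗ[ℝ] H))ᗮ, ν * ‖w‖ ≤ ‖Q w‖)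
    (β : ℝ) (hβ : 0 ≤ β)
    (B : H → H)
    (hB : ∀ x y : H, ‖B x - B y‖ ^ 2 ≤ β * ⟪B x - B y, x - y⟫)
    (hranB : Set.range B ⊆ Set.range Q)
    (x₁ x₂ w₁ w₂ : H)
    (hw₁ : w₁ ∈ (LinearMap.ker (Q : H →ₗ[ℝ] H))ᗮ) (hw₂ : w₂ ∈ (LinearMap.ker (Q : H →ₗ[ℝ] H))ᗮ)
    (hQw₁ : Q w₁ = B x₁) (hQw₂ : Q w₂ = B x₂) :
    ν ^ 2 * ⟪Q (w₁ - w₂), w₁ - w₂⟫ ≤ β ^ 2 * ⟪Q (x₁ - x₂), x₁ - x₂⟫ :=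
  stmt_1_general Q hQsym hQpos ν hν hνQ β B hB x₁ x₂ w₁ w₂ hw₁ hw₂ hQw₁ hQw₂
end

section
/- Theorem 2.5(iii) (Q-based cocoercivity of I − T): Assume 2ν > β. Let x₁, x₂, y₁, y₂ ∈ H satisfy Q xᵢ − B xᵢ − Q yᵢ ∈ A yᵢ for i = 1, 2 (i.e. yᵢ = T xᵢ), and set rᵢ := xᵢ − yᵢ. Then 4ν · ⟪Q (x₁ − x₂), r₁ − r₂⟫ ≥ (4ν − β) · ⟪Q (r₁ − r₂), r₁ − r₂⟫; i.e. I − T is Q-based (1 − β/(4ν))-cocoercive. -/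
/-!
Put `x = x₁ - x₂`, `r = r₁ - r₂` and `b = B x₁ - B x₂`. Monotonicity of `A` at `y₁, y₂` gives
`⟪Q x, r⟫ ≥ ‖r‖_Q² + ⟪b, x⟫ - ⟪b, r⟫`, and cocoercivity gives `⟪b, x⟫ ≥ ‖b‖² / β`. Since `b`
lies in the range of `Q` it is `Q p` with `p ⊥ ker Q`, so the Cauchy–Schwarz inequality for the
`Q`-seminorm together with `‖Q p‖ ≥ ν ‖p‖` yields `⟪b, r⟫ ≤ ‖b‖ ‖r‖_Q / √ν`. By AM-GM this is at
most `‖b‖² / β + β ‖r‖_Q² / (4ν)`, and the three inequalities add up to the claim.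
-/

open RealInnerProductSpace

theorem ContinuousLinearMap.exists_mem_orthogonal_ker_apply_eq {𝕜 E F : Type*} [RCLike 𝕜]
    [NormedAddCommGroup E] [InnerProductSpace 𝕜 E] [CompleteSpace E] [NormedAddCommGroup F]
    [NormedSpace 𝕜 F] (T : E →L[𝕜] F) {b : F} (hb : b ∈ LinearMap.range (T : E →ₗ[𝕜] F)) :
    ∃ p ∈ (LinearMap.ker (T : E →ₗ[𝕜] F))ᗮ, T p = b := by
  obtain ⟨u, rfl⟩ := hb
  have : CompleteSpace (LinearMap.ker (T : E →ₗ[𝕜] F)) := T.isClosed_ker.completeSpace_coe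
  obtain ⟨k, hk, p, hp, rfl⟩ := (LinearMap.ker (T : E →ₗ[𝕜] F)).exists_add_mem_mem_orthogonal u
  exact ⟨p, hp, by simpa using hk⟩

section

variable {H : Type*} [NormedAddCommGroup H] [InnerProductSpace ℝ H]

theorem LinearMap.IsPositive.sq_inner_le {T : H →ₗ[ℝ] H} (hT : T.IsPositive) (x y : H) :
    ⟪T x, y⟫ ^ 2 ≤ ⟪T x, x⟫ * ⟪T y, y⟫ := by
  have := LinearMap.BilinForm.apply_mul_apply_le_of_forall_zero_le ((innerₗ H).comp T)
    hT.inner_nonneg_left x y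
  simp only [LinearMap.comp_apply, innerₗ_apply_apply] at this
  rwa [hT.isSymmetric y x, real_inner_comm (T x) y, ← sq] at this

theorem ContinuousLinearMap.IsPositive.mul_sq_inner_le_of_mem_range [CompleteSpace H]
    {Q : H →L[ℝ] H} (hQ : Q.IsPositive) {ν : ℝ} (hν : 0 ≤ ν)
    (hνQ : ∀ w ∈ (LinearMap.ker (Q : H →ₗ[ℝ] H))ᗮ, ν * ‖w‖ ≤ ‖Q w‖) {b : H}
    (hb : b ∈ LinearMap.range (Q : H →ₗ[ℝ] H)) (r : H) : ν * ⟪b, r⟫ ^ 2 ≤ ‖b‖ ^ 2 * ⟪Q r, r⟫ := by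
  obtain ⟨p, hp, rfl⟩ := Q.exists_mem_orthogonal_ker_apply_eq hb
  have hpp : ν * ⟪Q p, p⟫ ≤ ‖Q p‖ ^ 2 :=
    calc ν * ⟪Q p, p⟫ ≤ ν * (‖Q p‖ * ‖p‖) := by gcongr; exact real_inner_le_norm _ _
      _ = ‖Q p‖ * (ν * ‖p‖) := by ring
      _ ≤ ‖Q p‖ ^ 2 := by rw [sq]; gcongr; exact hνQ p hp
  calc ν * ⟪Q p, r⟫ ^ 2 ≤ ν * (⟪Q p, p⟫ * ⟪Q r, r⟫) := by
        gcongr; exact hQ.toLinearMap.sq_inner_le p r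
    _ = (ν * ⟪Q p, p⟫) * ⟪Q r, r⟫ := by ring
    _ ≤ ‖Q p‖ ^ 2 * ⟪Q r, r⟫ := by gcongr; exact hQ.inner_nonneg_left r

theorem four_mul_inner_le_of_cocoercive {ν β c s : ℝ} {b x : H} (hν : 0 < ν) (hβ : 0 ≤ β)
    (hs : 0 ≤ s) (hc : ν * c ^ 2 ≤ ‖b‖ ^ 2 * s) (hb : ‖b‖ ^ 2 ≤ β * ⟪b, x⟫) :
    4 * ν * c ≤ 4 * ν * ⟪b, x⟫ + β * s := by
  rcases hβ.eq_or_lt with rfl | hβ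
  · have hb0 : b = 0 := by simpa using hb
    have hc0 : c = 0 := by
      have : ν * c ^ 2 ≤ ν * 0 := by simpa [hb0] using hc
      exact pow_eq_zero_iff two_ne_zero |>.1 <|
        le_antisymm (le_of_mul_le_mul_left this hν) (sq_nonneg c)
    simp [hb0, hc0]
  · -- AM-GM: `(4 ν ‖b‖² + β² s)² ≥ 16 ν β² ‖b‖² s ≥ (4 ν β c)²`
    have hsq : (4 * ν * β * c) ^ 2 ≤ (4 * ν * ‖b‖ ^ 2 + β ^ 2 * s) ^ 2 := by
      nlinarith [sq_nonneg (4 * ν * ‖b‖ ^ 2 - β ^ 2 * s),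
        mul_le_mul_of_nonneg_left hc (show 0 ≤ 16 * ν * β ^ 2 by positivity)]
    have hβc : β * (4 * ν * c) ≤ β * (4 * ν * ⟪b, x⟫ + β * s) := by
      nlinarith [le_of_sq_le_sq hsq (by positivity)]
    exact le_of_mul_le_mul_left hβc hβ

theorem fbs_residual_inner_le {Q : H →L[ℝ] H} (hQ : (Q : H →ₗ[ℝ] H).IsSymmetric) {A : H → Set H}
    (hA : ∀ x y u v : H, u ∈ A x → v ∈ A y → 0 ≤ ⟪u - v, x - y⟫) (B : H → H) {x₁ x₂ y₁ y₂ : H}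
    (hy₁ : Q x₁ - B x₁ - Q y₁ ∈ A y₁) (hy₂ : Q x₂ - B x₂ - Q y₂ ∈ A y₂) :
    ⟪Q (x₁ - y₁ - (x₂ - y₂)), x₁ - y₁ - (x₂ - y₂)⟫ + ⟪B x₁ - B x₂, x₁ - x₂⟫
      - ⟪B x₁ - B x₂, x₁ - y₁ - (x₂ - y₂)⟫ ≤ ⟪Q (x₁ - x₂), x₁ - y₁ - (x₂ - y₂)⟫ := by
  have h := hA _ _ _ _ hy₁ hy₂
  set r := x₁ - y₁ - (x₂ - y₂)
  set x := x₁ - x₂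
  set b := B x₁ - B x₂
  have hsymm : ⟪Q r, x⟫ = ⟪Q x, r⟫ := by
    rw [real_inner_comm]; exact (hQ _ _).symm
  have hu : Q x₁ - B x₁ - Q y₁ - (Q x₂ - B x₂ - Q y₂) = Q r - b := by
    simp only [r, b, map_sub]; abel
  have hy : y₁ - y₂ = x - r := by simp only [r, x]; abel
  rw [hu, hy] at h
  clear_value r x b
  rw [inner_sub_left, inner_sub_right, inner_sub_right, hsymm] at h
  linarith

end

theorem stmt_5_general
    {H : Type*} [NormedAddCommGroup H] [InnerProductSpace ℝ H] [CompleteSpace H]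
    (Q : H →L[ℝ] H)
    (hQsym : ∀ x y : H, ⟪Q x, y⟫ = ⟪x, Q y⟫)
    (hQpos : ∀ x : H, 0 ≤ ⟪Q x, x⟫)
    (ν : ℝ) (hν : 0 < ν)
    (hνQ : ∀ w ∈ (LinearMap.ker (Q : H →ₗ[ℝ] H))ᗮ, ν * ‖w‖ ≤ ‖Q w‖)
    (β : ℝ) (hβ : 0 ≤ β)
    (B : H → H)
    (hB : ∀ x y : H, ‖B x - B y‖ ^ 2 ≤ β * ⟪B x - B y, x - y⟫)
    (hranB : Set.range B ⊆ Set.range Q)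
    (A : H → Set H)
    (hA : ∀ x y u v : H, u ∈ A x → v ∈ A y → 0 ≤ ⟪u - v, x - y⟫)
    (x₁ x₂ y₁ y₂ : H)
    (hy₁ : Q x₁ - B x₁ - Q y₁ ∈ A y₁)
    (hy₂ : Q x₂ - B x₂ - Q y₂ ∈ A y₂)
    (r₁ r₂ : H) (hr₁ : r₁ = x₁ - y₁) (hr₂ : r₂ = x₂ - y₂) :
    (4 * ν - β) * ⟪Q (r₁ - r₂), r₁ - r₂⟫ ≤ 4 * ν * ⟪Q (x₁ - x₂), r₁ - r₂⟫ := by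
  subst hr₁ hr₂
  have hQ : Q.IsPositive := Q.isPositive_iff.2 ⟨hQsym, hQpos⟩
  have hb : B x₁ - B x₂ ∈ LinearMap.range (Q : H →ₗ[ℝ] H) :=
    sub_mem (hranB ⟨x₁, rfl⟩ :) (hranB ⟨x₂, rfl⟩ :)
  have hres := fbs_residual_inner_le hQ.isSymmetric hA B hy₁ hy₂
  have hforward := four_mul_inner_le_of_cocoercive hν hβ (hQpos _)
    (hQ.mul_sq_inner_le_of_mem_range hν.le hνQ hb (x₁ - y₁ - (x₂ - y₂))) (hB x₁ x₂)
  linarith [mul_le_mul_of_nonneg_left hres (by positivity : (0 : ℝ) ≤ 4 * ν)]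

/-- Theorem 2.5(iii): `I − T` is `Q`-based `(1 − β/(4ν))`-cocoercive. -/
theorem stmt_5
    {H : Type*} [NormedAddCommGroup H] [InnerProductSpace ℝ H] [CompleteSpace H]
    (Q : H →L[ℝ] H)
    (hQsym : ∀ x y : H, ⟪Q x, y⟫ = ⟪x, Q y⟫)
    (hQpos : ∀ x : H, 0 ≤ ⟪Q x, x⟫)
    (ν : ℝ) (hν : 0 < ν)
    (hνQ : ∀ w ∈ (LinearMap.ker (Q : H →ₗ[ℝ] H))ᗮ, ν * ‖w‖ ≤ ‖Q w‖)
    (β : ℝ) (hβ : 0 ≤ β)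
    (hνβ : β < 2 * ν)
    (B : H → H)
    (hB : ∀ x y : H, ‖B x - B y‖ ^ 2 ≤ β * ⟪B x - B y, x - y⟫)
    (hranB : Set.range B ⊆ Set.range Q)
    (A : H → Set H)
    (hA : ∀ x y u v : H, u ∈ A x → v ∈ A y → 0 ≤ ⟪u - v, x - y⟫)
    (x₁ x₂ y₁ y₂ : H)
    (hy₁ : Q x₁ - B x₁ - Q y₁ ∈ A y₁)
    (hy₂ : Q x₂ - B x₂ - Q y₂ ∈ A y₂)
    (r₁ r₂ : H) (hr₁ : r₁ = x₁ - y₁) (hr₂ : r₂ = x₂ - y₂) :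
    (4 * ν - β) * ⟪Q (r₁ - r₂), r₁ - r₂⟫ ≤ 4 * ν * ⟪Q (x₁ - x₂), r₁ - r₂⟫ :=
  stmt_5_general Q hQsym hQpos ν hν hνQ β hβ B hB hranB A hA x₁ x₂ y₁ y₂ hy₁ hy₂ r₁ r₂ hr₁ hr₂
end

section
/- Theorem 3.2(iv) (weak convergence in ran Q): Assume 2ν > β. Let (x_k) be a bounded sequence in H satisfying the G-FBS iteration Q x_k − B x_k − Q x_{k+1} ∈ A x_{k+1} for every k ∈ ℕ, suppose there exists x⋆ ∈ H with −B x⋆ ∈ A x⋆, and assume the following demiclosedness property of A + B (which holds when A is maximally monotone and B is cocoercive with full domain): for all sequences (y_k), (u_k) in H with u_k − B y_k ∈ A y_k for every k, if y_k converges weakly to y and u_k converges strongly to u, then u − B y ∈ A y. Then there exists z ∈ H with −B z ∈ A z such that Q x_k converges weakly to Q z, i.e. ⟪Q x_k, v⟫ → ⟪Q z, v⟫ as k → ∞ for every v ∈ H. -/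
/-!
With `V_k(z) = ‖x_k - z‖_Q²`, one step of the iteration and the monotonicity of `A` give
`c₁ ‖x_k - x_{k+1}‖_Q² + c₂ ‖B x_k - B z‖² ≤ V_k(z) - V_{k+1}(z)` for every zero `z` of `A + B`:
the cross term `⟪B x_k - B z, x_k - x_{k+1}⟫` is absorbed by Young's inequality, which is where
`B x_k - B z ∈ ran Q` and `2ν > β` enter. Hence every `V(z)` converges, the residuals
`Q x_k - Q x_{k+1}` and `B x_k - B x_{k+1}` tend to zero, and by demiclosedness every weak cluster
point of `(x_k)` is a zero. Opial's argument in the seminorm `‖·‖_Q` then shows that all weak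
cluster points have the same image under `Q`.
-/

open RealInnerProductSpace Filter Topology

theorem exists_subseq_tendsto_inner {H : Type*} [NormedAddCommGroup H] [InnerProductSpace ℝ H]
    [CompleteSpace H] {x : ℕ → H} (hx : Bornology.IsBounded (Set.range x)) :
    ∃ (y : H) (φ : ℕ → ℕ), StrictMono φ ∧
      ∀ v : H, Tendsto (fun i => ⟪x (φ i), v⟫) atTop (𝓝 ⟪y, v⟫) := by
  obtain ⟨C, hC⟩ := isBounded_iff_forall_norm_le.1 hx
  set M := (Submodule.span ℝ (Set.range x)).topologicalClosure
  have hxM : ∀ k, x k ∈ M := fun k =>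
    Submodule.le_topologicalClosure _ (Submodule.subset_span ⟨k, rfl⟩)
  have : CompleteSpace M := (Submodule.isClosed_topologicalClosure _).completeSpace_coe
  have : TopologicalSpace.SeparableSpace M := by
    have := ((Set.countable_range x).isSeparable.span (R := ℝ)).closure
    rw [← Submodule.topologicalClosure_coe] at this
    exact this.separableSpace
  -- Banach–Alaoglu in the separable space `M`, then Riesz representation in `M`.
  let f : ℕ → WeakDual ℝ M := fun k =>
    StrongDual.toWeakDual (InnerProductSpace.toDual ℝ M ⟨x k, hxM k⟩)
  have hf : ∀ k, f k ∈ WeakDual.toStrongDual ⁻¹' Metric.closedBall 0 C := fun k => by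
    have : ‖InnerProductSpace.toDual ℝ M ⟨x k, hxM k⟩‖ ≤ C :=
      ((InnerProductSpace.toDual ℝ M).norm_map _).trans_le (hC _ ⟨k, rfl⟩)
    exact (dist_zero_right _).trans_le this
  obtain ⟨ℓ, -, φ, hφ, hlim⟩ := WeakDual.isSeqCompact_closedBall ℝ M 0 C hf
  refine ⟨(InnerProductSpace.toDual ℝ M).symm (WeakDual.toStrongDual ℓ), φ, hφ, fun v => ?_⟩
  have hproj : ∀ u : M, ⟪(u : H), v⟫ = ⟪u, M.orthogonalProjectionOnto v⟫ := fun u =>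
    (Submodule.inner_orthogonalProjectionOnto_eq_of_mem_left u v).symm
  rw [hproj, InnerProductSpace.toDual_symm_apply]
  exact (((WeakDual.eval_continuous _).tendsto ℓ).comp hlim).congr fun i =>
    (hproj ⟨x (φ i), hxM (φ i)⟩).symm

namespace ContinuousLinearMap.IsPositive

variable {H : Type*} [NormedAddCommGroup H] [InnerProductSpace ℝ H] {Q : H →L[ℝ] H}

theorem inner_apply_add_add (hQ : Q.IsPositive) (a b : H) :
    ⟪Q (a + b), a + b⟫ = ⟪Q a, a⟫ + 2 * ⟪Q a, b⟫ + ⟪Q b, b⟫ := by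
  have hba : ⟪Q b, a⟫ = ⟪Q a, b⟫ := by
    rw [hQ.inner_left_eq_inner_right, real_inner_comm]
  rw [map_add, inner_add_left, inner_add_right, inner_add_right, hba]
  ring

theorem inner_apply_sq_le_mul (hQ : Q.IsPositive) (w d : H) :
    ⟪Q w, d⟫ ^ 2 ≤ ⟪Q w, w⟫ * ⟪Q d, d⟫ := by
  have hquad : ∀ t : ℝ, 0 ≤ ⟪Q d, d⟫ * (t * t) + 2 * ⟪Q w, d⟫ * t + ⟪Q w, w⟫ := fun t => by
    have := hQ.inner_nonneg_left (w + t • d)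
    simp only [hQ.inner_apply_add_add, map_smul, real_inner_smul_left,
      real_inner_smul_right] at this
    linarith
  have := discrim_le_zero hquad
  rw [discrim] at this
  nlinarith

theorem norm_apply_sq_le (hQ : Q.IsPositive) (w : H) : ‖Q w‖ ^ 2 ≤ ‖Q‖ * ⟪Q w, w⟫ := by
  have hcs := hQ.inner_apply_sq_le_mul w (Q w)
  have hQQ : ⟪Q (Q w), Q w⟫ ≤ ‖Q‖ * ‖Q w‖ ^ 2 := by
    calc ⟪Q (Q w), Q w⟫ ≤ ‖Q (Q w)‖ * ‖Q w‖ := real_inner_le_norm _ _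
      _ ≤ ‖Q‖ * ‖Q w‖ * ‖Q w‖ := by gcongr; exact Q.le_opNorm _
      _ = ‖Q‖ * ‖Q w‖ ^ 2 := by ring
  rw [real_inner_self_eq_norm_sq] at hcs
  rcases (norm_nonneg (Q w)).eq_or_lt with h0 | hpos
  · rw [← h0]; simpa using mul_nonneg (norm_nonneg Q) (hQ.inner_nonneg_left w)
  · refine le_of_mul_le_mul_right ?_ (pow_pos hpos 2)
    calc ‖Q w‖ ^ 2 * ‖Q w‖ ^ 2 = (‖Q w‖ ^ 2) ^ 2 := by ring
      _ ≤ ⟪Q w, w⟫ * (‖Q‖ * ‖Q w‖ ^ 2) := hcs.trans (by gcongr; exact hQ.inner_nonneg_left w)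
      _ = ‖Q‖ * ⟪Q w, w⟫ * ‖Q w‖ ^ 2 := by ring

theorem apply_eq_zero_of_inner_apply_self_eq_zero (hQ : Q.IsPositive) {w : H}
    (hw : ⟪Q w, w⟫ = 0) : Q w = 0 := by
  have := hQ.norm_apply_sq_le w
  rw [hw, mul_zero] at this
  exact norm_eq_zero.1 (pow_eq_zero_iff two_ne_zero |>.1 (le_antisymm this (sq_nonneg _)))

theorem mul_inner_sq_le_of_mem_range [CompleteSpace H] (hQ : Q.IsPositive) {ν : ℝ} (hν : 0 ≤ ν)
    (hνQ : ∀ w ∈ (LinearMap.ker (Q : H →ₗ[ℝ] H))ᗮ, ν * ‖w‖ ≤ ‖Q w‖) {u : H}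
    (hu : u ∈ Set.range Q) (d : H) : ν * ⟪u, d⟫ ^ 2 ≤ ‖u‖ ^ 2 * ⟪Q d, d⟫ := by
  set K := LinearMap.ker (Q : H →ₗ[ℝ] H)
  have : CompleteSpace K := Q.isClosed_ker.completeSpace_coe
  obtain ⟨w₀, rfl⟩ := hu
  obtain ⟨p, hp, w, hw, rfl⟩ := K.exists_add_mem_mem_orthogonal w₀
  have hQp : Q p = 0 := hp
  rw [map_add, hQp, zero_add]
  have hνw : ν * ⟪Q w, w⟫ ≤ ‖Q w‖ ^ 2 := by
    calc ν * ⟪Q w, w⟫ ≤ ν * (‖Q w‖ * ‖w‖) := by gcongr; exact real_inner_le_norm _ _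
      _ = ‖Q w‖ * (ν * ‖w‖) := by ring
      _ ≤ ‖Q w‖ * ‖Q w‖ := by gcongr; exact hνQ w hw
      _ = ‖Q w‖ ^ 2 := by ring
  calc ν * ⟪Q w, d⟫ ^ 2 ≤ ν * (⟪Q w, w⟫ * ⟪Q d, d⟫) := by
        gcongr; exact hQ.inner_apply_sq_le_mul w d
    _ = (ν * ⟪Q w, w⟫) * ⟪Q d, d⟫ := by ring
    _ ≤ ‖Q w‖ ^ 2 * ⟪Q d, d⟫ := by gcongr; exact hQ.inner_nonneg_left d

theorem apply_eq_apply_of_tendsto_inner (hQ : Q.IsPositive) {x : ℕ → H} {z₁ z₂ : H} {ℓ₁ ℓ₂ : ℝ}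
    (hV₁ : Tendsto (fun k => ⟪Q (x k - z₁), x k - z₁⟫) atTop (𝓝 ℓ₁))
    (hV₂ : Tendsto (fun k => ⟪Q (x k - z₂), x k - z₂⟫) atTop (𝓝 ℓ₂))
    {φ₁ φ₂ : ℕ → ℕ} (hφ₁ : Tendsto φ₁ atTop atTop) (hφ₂ : Tendsto φ₂ atTop atTop)
    (hx₁ : ∀ v, Tendsto (fun i => ⟪x (φ₁ i), v⟫) atTop (𝓝 ⟪z₁, v⟫))
    (hx₂ : ∀ v, Tendsto (fun i => ⟪x (φ₂ i), v⟫) atTop (𝓝 ⟪z₂, v⟫)) :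
    Q z₁ = Q z₂ := by
  set w := Q (z₁ - z₂)
  have hid : ∀ k, ⟪x k, w⟫ = (⟪Q (x k - z₂), x k - z₂⟫ - ⟪Q (x k - z₁), x k - z₁⟫
      + ⟪Q (z₂ - z₁), z₂ - z₁⟫) / 2 + ⟪z₂, w⟫ := fun k => by
    have hexp := hQ.inner_apply_add_add (x k - z₂) (z₂ - z₁)
    have hcross : ⟪Q (x k - z₂), z₂ - z₁⟫ = ⟪z₂, w⟫ - ⟪x k, w⟫ := by
      rw [hQ.inner_left_eq_inner_right, ← neg_sub z₁ z₂, map_neg, inner_neg_right,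
        inner_sub_left]
      ring
    rw [sub_add_sub_cancel] at hexp
    linarith
  obtain ⟨L, hL⟩ : ∃ L, Tendsto (fun k => ⟪x k, w⟫) atTop (𝓝 L) :=
    ⟨_, ((((hV₂.sub hV₁).add_const _).div_const 2).add_const _).congr fun k => (hid k).symm⟩
  have h₁ : ⟪z₁, w⟫ = L := tendsto_nhds_unique (hx₁ w) (hL.comp hφ₁)
  have h₂ : ⟪z₂, w⟫ = L := tendsto_nhds_unique (hx₂ w) (hL.comp hφ₂)
  have hw : ⟪Q (z₁ - z₂), z₁ - z₂⟫ = 0 := by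
    rw [real_inner_comm, inner_sub_left, h₁, h₂, sub_self]
  rw [← sub_eq_zero, ← map_sub]
  exact hQ.apply_eq_zero_of_inner_apply_self_eq_zero hw

/-- Opial's lemma for the seminorm `‖·‖_Q`. -/
theorem exists_mem_tendsto_inner_apply [CompleteSpace H] (hQ : Q.IsPositive) {x : ℕ → H}
    (hx : Bornology.IsBounded (Set.range x)) {S : Set H}
    (hS : ∀ z ∈ S, ∃ ℓ, Tendsto (fun k => ⟪Q (x k - z), x k - z⟫) atTop (𝓝 ℓ))
    (hcl : ∀ (φ : ℕ → ℕ) (y : H), Tendsto φ atTop atTop →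
      (∀ v, Tendsto (fun i => ⟪x (φ i), v⟫) atTop (𝓝 ⟪y, v⟫)) → y ∈ S) :
    ∃ z ∈ S, ∀ v, Tendsto (fun k => ⟪Q (x k), v⟫) atTop (𝓝 ⟪Q z, v⟫) := by
  have hcluster : ∀ φ : ℕ → ℕ, Tendsto φ atTop atTop → ∃ y ∈ S, ∃ ψ : ℕ → ℕ, StrictMono ψ ∧
      ∀ v, Tendsto (fun i => ⟪x (φ (ψ i)), v⟫) atTop (𝓝 ⟪y, v⟫) := fun φ hφ => by
    obtain ⟨y, ψ, hψ, hy⟩ :=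
      exists_subseq_tendsto_inner (hx.subset (Set.range_comp_subset_range φ x))
    exact ⟨y, hcl _ y (hφ.comp hψ.tendsto_atTop) hy, ψ, hψ, hy⟩
  obtain ⟨z, hz, ψ₀, hψ₀, hz_lim⟩ := hcluster id tendsto_id
  refine ⟨z, hz, fun v => tendsto_of_subseq_tendsto fun φ hφ => ?_⟩
  obtain ⟨y, hy, ψ, hψ, hy_lim⟩ := hcluster φ hφ
  obtain ⟨ℓy, hℓy⟩ := hS y hy
  obtain ⟨ℓz, hℓz⟩ := hS z hz
  have hQy : Q y = Q z := hQ.apply_eq_apply_of_tendsto_inner hℓy hℓz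
    (hφ.comp hψ.tendsto_atTop) hψ₀.tendsto_atTop hy_lim hz_lim
  refine ⟨ψ, ?_⟩
  rw [← hQy, hQ.inner_left_eq_inner_right]
  simpa only [hQ.inner_left_eq_inner_right] using hy_lim (Q v)

end ContinuousLinearMap.IsPositive

section ForwardBackward

variable {H : Type*} [NormedAddCommGroup H] [InnerProductSpace ℝ H]

theorem cocoercive_of_le {B : H → H} {β β' : ℝ} (hβ : 0 ≤ β) (hββ' : β ≤ β')
    (hB : ∀ x y, ‖B x - B y‖ ^ 2 ≤ β * ⟪B x - B y, x - y⟫) (x y : H) :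
    ‖B x - B y‖ ^ 2 ≤ β' * ⟪B x - B y, x - y⟫ := by
  have h := hB x y
  rcases hβ.eq_or_lt with rfl | hβ
  · have : B x - B y = 0 := by simpa using h
    simp [this]
  · have hinner : 0 ≤ ⟪B x - B y, x - y⟫ := by
      by_contra! hneg
      nlinarith [sq_nonneg ‖B x - B y‖, mul_neg_of_pos_of_neg hβ hneg]
    nlinarith

theorem gfbs_step_descent [CompleteSpace H] {Q : H →L[ℝ] H} (hQ : Q.IsPositive) {ν β t : ℝ}
    (hν : 0 < ν) (hνQ : ∀ w ∈ (LinearMap.ker (Q : H →ₗ[ℝ] H))ᗮ, ν * ‖w‖ ≤ ‖Q w‖)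
    (hβ : 0 < β) (ht : 0 < t) {B : H → H}
    (hB : ∀ x y, ‖B x - B y‖ ^ 2 ≤ β * ⟪B x - B y, x - y⟫) (hranB : Set.range B ⊆ Set.range Q)
    {A : H → Set H} (hA : ∀ x y u v, u ∈ A x → v ∈ A y → 0 ≤ ⟪u - v, x - y⟫) {x x' z : H}
    (hx' : Q x - B x - Q x' ∈ A x') (hz : -B z ∈ A z) :
    (1 - t / ν) * ⟪Q (x - x'), x - x'⟫ + (2 / β - 1 / t) * ‖B x - B z‖ ^ 2
      ≤ ⟪Q (x - z), x - z⟫ - ⟪Q (x' - z), x' - z⟫ := by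
  set d := x - x'
  set e := x' - z
  set w := B x - B z
  have hde : x - z = d + e := by simp only [d, e, sub_add_sub_cancel]
  have hV : ⟪Q (x - z), x - z⟫ - ⟪Q e, e⟫ = ⟪Q d, d⟫ + 2 * ⟪Q d, e⟫ := by
    rw [hde, hQ.inner_apply_add_add]
    ring
  have hmono : ⟪w, e⟫ ≤ ⟪Q d, e⟫ := by
    have h := hA _ _ _ _ hx' hz
    rw [show Q x - B x - Q x' - -B z = Q d - w by simp only [d, w, map_sub]; abel,
      inner_sub_left] at h
    linarith
  have hcoco : ‖w‖ ^ 2 ≤ β * (⟪w, d⟫ + ⟪w, e⟫) := by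
    rw [← inner_add_right, ← hde]
    exact hB x z
  have hw : w ∈ Set.range Q := by
    obtain ⟨p, hp⟩ := hranB ⟨x, rfl⟩
    obtain ⟨p', hp'⟩ := hranB ⟨z, rfl⟩
    exact ⟨p - p', by rw [map_sub, hp, hp']⟩
  have hq := hQ.inner_nonneg_left d
  have hyoung : 2 * ⟪w, d⟫ ≤ t / ν * ⟪Q d, d⟫ + ‖w‖ ^ 2 / t := by
    refine two_mul_le_add_of_sq_le_mul (by positivity) (by positivity) ?_
    have := hQ.mul_inner_sq_le_of_mem_range hν.le hνQ hw d
    calc ⟪w, d⟫ ^ 2 ≤ ‖w‖ ^ 2 * ⟪Q d, d⟫ / ν := by rw [le_div_iff₀ hν]; linarith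
      _ = t / ν * ⟪Q d, d⟫ * (‖w‖ ^ 2 / t) := by field_simp
  have hcoco' : 2 / β * ‖w‖ ^ 2 ≤ 2 * (⟪w, d⟫ + ⟪w, e⟫) := by
    rw [div_mul_eq_mul_div, div_le_iff₀ hβ]
    linarith
  rw [hV]
  have : ‖w‖ ^ 2 / t = 1 / t * ‖w‖ ^ 2 := by ring
  linarith

theorem tendsto_zero_of_mul_le_sub_succ {V u : ℕ → ℝ} {ℓ c : ℝ} (hV : Tendsto V atTop (𝓝 ℓ))
    (hc : 0 < c) (hu : ∀ k, 0 ≤ u k) (h : ∀ k, c * u k ≤ V k - V (k + 1)) :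
    Tendsto u atTop (𝓝 0) := by
  have hΔ : Tendsto (fun k => (V k - V (k + 1)) / c) atTop (𝓝 0) := by
    simpa using (hV.sub (hV.comp (tendsto_add_atTop_nat 1))).div_const c
  exact squeeze_zero hu (fun k => by rw [le_div_iff₀ hc]; linarith [h k]) hΔ

theorem tendsto_zero_of_tendsto_norm_sq {ι E : Type*} [SeminormedAddGroup E] {l : Filter ι}
    {f : ι → E} (h : Tendsto (fun k => ‖f k‖ ^ 2) l (𝓝 0)) : Tendsto f l (𝓝 0) := by
  rw [tendsto_zero_iff_norm_tendsto_zero]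
  simpa using h.sqrt

theorem tendsto_gfbs_residual {Q : H →L[ℝ] H} (hQ : Q.IsPositive) {B : H → H} {x : ℕ → H} {z : H}
    {c₁ c₂ ℓ : ℝ} (hc₁ : 0 < c₁) (hc₂ : 0 < c₂)
    (hV : Tendsto (fun k => ⟪Q (x k - z), x k - z⟫) atTop (𝓝 ℓ))
    (h : ∀ k, c₁ * ⟪Q (x k - x (k + 1)), x k - x (k + 1)⟫ + c₂ * ‖B (x k) - B z‖ ^ 2
      ≤ ⟪Q (x k - z), x k - z⟫ - ⟪Q (x (k + 1) - z), x (k + 1) - z⟫) :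
    Tendsto (fun k => Q (x k) - B (x k) - Q (x (k + 1)) + B (x (k + 1))) atTop (𝓝 0) := by
  have hq := tendsto_zero_of_mul_le_sub_succ hV hc₁ (fun k => hQ.inner_nonneg_left _)
    fun k => (le_add_of_nonneg_right (by positivity)).trans (h k)
  have hs := tendsto_zero_of_mul_le_sub_succ hV hc₂ (fun k => sq_nonneg _)
    fun k => (le_add_of_nonneg_left (mul_nonneg hc₁.le (hQ.inner_nonneg_left _))).trans (h k)
  have hQd : Tendsto (fun k => Q (x k - x (k + 1))) atTop (𝓝 0) :=
    tendsto_zero_of_tendsto_norm_sq (squeeze_zero (fun k => sq_nonneg _)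
      (fun k => hQ.norm_apply_sq_le _) (by simpa using hq.const_mul ‖Q‖))
  have hBx : Tendsto (fun k => B (x k) - B z) atTop (𝓝 0) := tendsto_zero_of_tendsto_norm_sq hs
  have hres := hQd.sub (hBx.sub (hBx.comp (tendsto_add_atTop_nat 1)))
  rw [sub_zero, sub_zero] at hres
  exact hres.congr fun k => by simp only [Function.comp, map_sub]; abel

end ForwardBackward

/-- Theorem 3.2(iv): weak convergence of the G-FBS iterates in `ran Q`. -/
theorem stmt_12
    {H : Type*} [NormedAddCommGroup H] [InnerProductSpace ℝ H] [CompleteSpace H]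
    (Q : H →L[ℝ] H)
    (hQsym : ∀ x y : H, ⟪Q x, y⟫ = ⟪x, Q y⟫)
    (hQpos : ∀ x : H, 0 ≤ ⟪Q x, x⟫)
    (ν : ℝ) (hν : 0 < ν)
    (hνQ : ∀ w ∈ (LinearMap.ker (Q : H →ₗ[ℝ] H))ᗮ, ν * ‖w‖ ≤ ‖Q w‖)
    (β : ℝ) (hβ : 0 ≤ β)
    (hνβ : β < 2 * ν)
    (B : H → H)
    (hB : ∀ x y : H, ‖B x - B y‖ ^ 2 ≤ β * ⟪B x - B y, x - y⟫)
    (hranB : Set.range B ⊆ Set.range Q)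
    (A : H → Set H)
    (hA : ∀ x y u v : H, u ∈ A x → v ∈ A y → 0 ≤ ⟪u - v, x - y⟫)
    (hdemi : ∀ (y u : ℕ → H) (ylim ulim : H),
      (∀ k : ℕ, u k - B (y k) ∈ A (y k)) →
      (∀ v : H, Filter.Tendsto (fun k : ℕ => ⟪y k, v⟫) Filter.atTop (nhds ⟪ylim, v⟫)) →
      Filter.Tendsto u Filter.atTop (nhds ulim) →
      ulim - B ylim ∈ A ylim)
    (x : ℕ → H)
    (hbdd : Bornology.IsBounded (Set.range x))
    (hiter : ∀ k : ℕ, Q (x k) - B (x k) - Q (x (k + 1)) ∈ A (x (k + 1)))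
    (xs : H) (hxs : -B xs ∈ A xs) :
    ∃ z : H, -B z ∈ A z ∧
      ∀ v : H, Filter.Tendsto (fun k : ℕ => ⟪Q (x k), v⟫) Filter.atTop (nhds ⟪Q z, v⟫) := by
  have hQ : Q.IsPositive := (Q.isPositive_iff).2 ⟨hQsym, hQpos⟩
  -- Enlarging `β` keeps cocoercivity, and a positive `β'` avoids the junk value `2 / 0 = 0`.
  obtain ⟨β', hβ', hβ'ν, hB'⟩ : ∃ β', 0 < β' ∧ β' < 2 * ν ∧
      ∀ x y, ‖B x - B y‖ ^ 2 ≤ β' * ⟪B x - B y, x - y⟫ :=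
    ⟨max β ν, lt_max_of_lt_right hν, max_lt hνβ (by linarith),
      cocoercive_of_le hβ (le_max_left β ν) hB⟩
  obtain ⟨t, ht, htν, hβ't⟩ : ∃ t, 0 < t ∧ t < ν ∧ β' < 2 * t :=
    ⟨(β' + 2 * ν) / 4, by positivity, by linarith, by linarith⟩
  have hc₁ : 0 < 1 - t / ν := by rw [sub_pos, div_lt_one hν]; exact htν
  have hc₂ : 0 < 2 / β' - 1 / t := by
    rw [sub_pos, div_lt_div_iff₀ ht hβ']; linarith
  have hstep := fun z (hz : -B z ∈ A z) k =>
    gfbs_step_descent hQ hν hνQ hβ' ht hB' hranB hA (hiter k) hz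
  have hV : ∀ z, -B z ∈ A z → ∃ ℓ, Tendsto (fun k => ⟪Q (x k - z), x k - z⟫) atTop (𝓝 ℓ) :=
    fun z hz => ⟨_, tendsto_atTop_ciInf (antitone_nat_of_succ_le fun k => by
      nlinarith [hstep z hz k, hQ.inner_nonneg_left (x k - x (k + 1)),
        sq_nonneg ‖B (x k) - B z‖]) ⟨0, by rintro - ⟨k, rfl⟩; exact hQ.inner_nonneg_left _⟩⟩
  obtain ⟨ℓ, hℓ⟩ := hV xs hxs
  have hres := tendsto_gfbs_residual hQ hc₁ hc₂ hℓ (hstep xs hxs)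
  obtain ⟨z, hz, hlim⟩ := hQ.exists_mem_tendsto_inner_apply (x := fun k => x (k + 1))
    (hbdd.subset (Set.range_comp_subset_range _ x)) (S := {z | -B z ∈ A z})
    (fun z hz => (hV z hz).imp fun ℓ h => h.comp (tendsto_add_atTop_nat 1))
    fun φ y hφ hy => by
      simpa using hdemi _ _ y 0
        (fun i => by simpa only [Function.comp, add_sub_cancel_right] using hiter (φ i))
        hy (hres.comp hφ)
  exact ⟨z, hz, fun v => (tendsto_add_atTop_iff_nat 1).1 (hlim v)⟩
end

section
/- Lemma 3.6(i) (degenerate sufficient decrease, without convexity of g): Let g : H → ℝ and let x, x⁺ ∈ H be such that x⁺ minimizes the function z ↦ g(z) + (1/2)⟪Q(z − x), z − x⟫ + ⟪∇f(x), z − x⟫ over H. Then, writing h := f + g, one has 2ν · (h(x) − h(x⁺)) ≥ (ν − β) · ⟪Q(x⁺ − x), x⁺ − x⟫; i.e. h(x) − h(x⁺) ≥ (1/2)(1 − β/ν) ‖x⁺ − x‖_Q². -/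
/-!
Minimality of `x⁺` tested against `z = x` gives
`g x⁺ + ½‖x⁺ - x‖_Q² + ⟪∇f x, x⁺ - x⟫ ≤ g x`, so it suffices to prove the descent inequality
`f x⁺ ≤ f x + ⟪∇f x, x⁺ - x⟫ + (β / 2ν) ‖x⁺ - x‖_Q²` in the degenerate `Q`-seminorm.
Gradient differences lie in the range of `Q`, and on that range the `Q`-Cauchy–Schwarz
inequality together with `ν ⟪Q w, w⟫ ≤ ‖Q w‖²` gives `ν ⟪Δ, d⟫² ≤ ‖Δ‖² ‖d‖_Q²`;
combined with cocoercivity `‖Δ‖² ≤ β t ⟪Δ, d⟫` for `Δ = ∇f (x + t d) - ∇f x`, this bounds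
`⟪Δ, d⟫ ≤ t (β / ν) ‖d‖_Q²`, which integrates along the segment from `x` to `x⁺`.
-/

open RealInnerProductSpace

theorem le_add_deriv_add_half_of_deriv_sub_le {φ φ' : ℝ → ℝ} {L : ℝ}
    (hφ : ∀ t, HasDerivAt φ (φ' t) t) (hφ' : ∀ t ∈ Set.Ioo (0 : ℝ) 1, φ' t - φ' 0 ≤ t * L) :
    φ 1 ≤ φ 0 + φ' 0 + L / 2 := by
  set ψ : ℝ → ℝ := fun t => φ t - t * φ' 0 - t ^ 2 / 2 * L
  have hψ : ∀ t, HasDerivAt ψ (φ' t - φ' 0 - t * L) t := fun t =>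
    (((hφ t).sub ((hasDerivAt_id' t).mul_const (φ' 0))).sub
      (((hasDerivAt_pow 2 t).div_const 2).mul_const L)).congr_deriv (by norm_num)
  have hanti : AntitoneOn ψ (Set.Icc 0 1) := by
    refine antitoneOn_of_hasDerivWithinAt_nonpos (convex_Icc 0 1)
      (fun t _ => (hψ t).continuousAt.continuousWithinAt) (fun t _ => (hψ t).hasDerivWithinAt)
      fun t ht => ?_
    rw [interior_Icc] at ht
    linarith [hφ' t ht]
  have := hanti (by simp) (by simp) zero_le_one
  simp only [ψ] at this
  linarith

section Seminorm

variable {H : Type*} [NormedAddCommGroup H] [InnerProductSpace ℝ H] {Q : H →L[ℝ] H}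

theorem sq_inner_map_le_inner_map_self_mul_inner_map_self
    (hQsym : ∀ x y : H, ⟪Q x, y⟫ = ⟪x, Q y⟫) (hQpos : ∀ x : H, 0 ≤ ⟪Q x, x⟫) (u v : H) :
    ⟪Q u, v⟫ ^ 2 ≤ ⟪Q u, u⟫ * ⟪Q v, v⟫ := by
  have hquad : ∀ r : ℝ, 0 ≤ ⟪Q v, v⟫ * (r * r) + 2 * ⟪Q u, v⟫ * r + ⟪Q u, u⟫ := fun r => by
    have hexpand : ⟪Q (u + r • v), u + r • v⟫ =
        ⟪Q u, u⟫ + r * ⟪Q u, v⟫ + r * ⟪Q v, u⟫ + r * r * ⟪Q v, v⟫ := by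
      simp only [map_add, map_smul, inner_add_left, inner_add_right, real_inner_smul_left,
        real_inner_smul_right]
      ring
    have hsymm : ⟪Q v, u⟫ = ⟪Q u, v⟫ := by rw [hQsym, real_inner_comm]
    rw [hsymm] at hexpand
    linarith [hQpos (u + r • v)]
  have := discrim_le_zero hquad
  rw [discrim] at this
  linarith

theorem mul_inner_map_self_le_norm_map_sq [CompleteSpace H]
    (hQsym : ∀ x y : H, ⟪Q x, y⟫ = ⟪x, Q y⟫) {ν : ℝ} (hν : 0 < ν)
    (hνQ : ∀ w ∈ (LinearMap.ker (Q : H →ₗ[ℝ] H))ᗮ, ν * ‖w‖ ≤ ‖Q w‖) (w : H) :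
    ν * ⟪Q w, w⟫ ≤ ‖Q w‖ ^ 2 := by
  set K := LinearMap.ker (Q : H →ₗ[ℝ] H)
  have : CompleteSpace K := (ContinuousLinearMap.isClosed_ker Q).completeSpace_coe
  set k := K.starProjection w
  set u := w - k
  have hQk : Q k = 0 := K.starProjection_apply_mem w
  have hQw : Q w = Q u := by simp [u, hQk]
  have hinner : ⟪Q w, w⟫ = ⟪Q u, u⟫ := by
    have hk : ⟪Q u, k⟫ = 0 := by rw [hQsym, hQk, inner_zero_right]
    calc ⟪Q w, w⟫ = ⟪Q u, u + k⟫ := by rw [sub_add_cancel, hQw]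
      _ = ⟪Q u, u⟫ := by rw [inner_add_right, hk, add_zero]
  have hlower : ν * ‖u‖ ≤ ‖Q u‖ := hνQ u (K.sub_starProjection_mem_orthogonal w)
  calc ν * ⟪Q w, w⟫ = ν * ⟪Q u, u⟫ := by rw [hinner]
    _ ≤ ν * (‖Q u‖ * ‖u‖) := mul_le_mul_of_nonneg_left (real_inner_le_norm _ _) hν.le
    _ = ‖Q u‖ * (ν * ‖u‖) := by ring
    _ ≤ ‖Q u‖ * ‖Q u‖ := mul_le_mul_of_nonneg_left hlower (norm_nonneg _)
    _ = ‖Q w‖ ^ 2 := by rw [hQw, sq]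

theorem mul_sq_inner_map_le_norm_map_sq_mul [CompleteSpace H]
    (hQsym : ∀ x y : H, ⟪Q x, y⟫ = ⟪x, Q y⟫) (hQpos : ∀ x : H, 0 ≤ ⟪Q x, x⟫) {ν : ℝ}
    (hν : 0 < ν) (hνQ : ∀ w ∈ (LinearMap.ker (Q : H →ₗ[ℝ] H))ᗮ, ν * ‖w‖ ≤ ‖Q w‖) (w d : H) :
    ν * ⟪Q w, d⟫ ^ 2 ≤ ‖Q w‖ ^ 2 * ⟪Q d, d⟫ :=
  calc ν * ⟪Q w, d⟫ ^ 2 ≤ ν * (⟪Q w, w⟫ * ⟪Q d, d⟫) :=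
        mul_le_mul_of_nonneg_left
          (sq_inner_map_le_inner_map_self_mul_inner_map_self hQsym hQpos w d) hν.le
    _ = ν * ⟪Q w, w⟫ * ⟪Q d, d⟫ := by ring
    _ ≤ ‖Q w‖ ^ 2 * ⟪Q d, d⟫ :=
        mul_le_mul_of_nonneg_right (mul_inner_map_self_le_norm_map_sq hQsym hν hνQ w) (hQpos d)

theorem inner_gradient_sub_le_of_cocoercive [CompleteSpace H]
    (hQsym : ∀ x y : H, ⟪Q x, y⟫ = ⟪x, Q y⟫) (hQpos : ∀ x : H, 0 ≤ ⟪Q x, x⟫) {ν : ℝ}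
    (hν : 0 < ν) (hνQ : ∀ w ∈ (LinearMap.ker (Q : H →ₗ[ℝ] H))ᗮ, ν * ‖w‖ ≤ ‖Q w‖)
    {β : ℝ} (hβ : 0 ≤ β) {f' : H → H} (hranf' : Set.range f' ⊆ Set.range Q)
    (hcoco : ∀ x y : H, ‖f' x - f' y‖ ^ 2 ≤ β * ⟪f' x - f' y, x - y⟫)
    (x d : H) {t : ℝ} (ht : 0 ≤ t) :
    ⟪f' (x + t • d) - f' x, d⟫ ≤ t * (β / ν * ⟪Q d, d⟫) := by
  obtain ⟨a, ha⟩ := hranf' ⟨x + t • d, rfl⟩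
  obtain ⟨b, hb⟩ := hranf' ⟨x, rfl⟩
  set Δ := f' (x + t • d) - f' x
  have hΔ : Q (a - b) = Δ := by rw [map_sub, ha, hb]
  have hQ : ν * ⟪Δ, d⟫ ^ 2 ≤ ‖Δ‖ ^ 2 * ⟪Q d, d⟫ := by
    simpa only [hΔ] using mul_sq_inner_map_le_norm_map_sq_mul hQsym hQpos hν hνQ (a - b) d
  have hco : ‖Δ‖ ^ 2 ≤ β * (t * ⟪Δ, d⟫) := by
    simpa only [add_sub_cancel_left, real_inner_smul_right] using hcoco (x + t • d) x
  have hs := hQpos d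
  rw [show t * (β / ν * ⟪Q d, d⟫) = β * t * ⟪Q d, d⟫ / ν by ring, le_div_iff₀' hν]
  rcases le_or_gt ⟪Δ, d⟫ 0 with hneg | hpos
  · nlinarith [mul_nonneg (mul_nonneg hβ ht) hs]
  · have : ν * ⟪Δ, d⟫ * ⟪Δ, d⟫ ≤ β * t * ⟪Q d, d⟫ * ⟪Δ, d⟫ := by
      nlinarith [mul_le_mul_of_nonneg_right hco hs]
    exact le_of_mul_le_mul_right this hpos

end Seminorm

theorem le_add_inner_add_half_of_inner_gradient_sub_le {H : Type*} [NormedAddCommGroup H]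
    [InnerProductSpace ℝ H] [CompleteSpace H] {f : H → ℝ} {f' : H → H}
    (hf : ∀ x : H, HasGradientAt f (f' x) x) {x d : H} {L : ℝ}
    (hL : ∀ t ∈ Set.Ioo (0 : ℝ) 1, ⟪f' (x + t • d) - f' x, d⟫ ≤ t * L) :
    f (x + d) ≤ f x + ⟪f' x, d⟫ + L / 2 := by
  have hline : ∀ t : ℝ, HasDerivAt (fun r : ℝ => f (x + r • d)) ⟪f' (x + t • d), d⟫ t := by
    intro t
    have hsegment : HasDerivAt (fun r : ℝ => x + r • d) d t := by
      simpa using ((hasDerivAt_id t).smul_const d).const_add x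
    exact (hf (x + t • d)).hasFDerivAt.comp_hasDerivAt t hsegment
  simpa using le_add_deriv_add_half_of_deriv_sub_le hline fun t ht => by
    simpa only [zero_smul, add_zero, inner_sub_left] using hL t ht

/-- Lemma 3.6(i): degenerate sufficient decrease property, without convexity of `g`. -/
theorem stmt_16
    {H : Type*} [NormedAddCommGroup H] [InnerProductSpace ℝ H] [CompleteSpace H]
    (Q : H →L[ℝ] H)
    (hQsym : ∀ x y : H, ⟪Q x, y⟫ = ⟪x, Q y⟫)
    (hQpos : ∀ x : H, 0 ≤ ⟪Q x, x⟫)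
    (ν : ℝ) (hν : 0 < ν)
    (hνQ : ∀ w ∈ (LinearMap.ker (Q : H →ₗ[ℝ] H))ᗮ, ν * ‖w‖ ≤ ‖Q w‖)
    (β : ℝ) (hβ : 0 ≤ β)
    (f : H → ℝ) (f' : H → H)
    (hf : ∀ x : H, HasGradientAt f (f' x) x)
    (hranf' : Set.range f' ⊆ Set.range Q)
    (hcoco : ∀ x y : H, ‖f' x - f' y‖ ^ 2 ≤ β * ⟪f' x - f' y, x - y⟫)
    (g : H → ℝ) (x xp : H)
    (hmin : ∀ z : H,
      g xp + (1 / 2) * ⟪Q (xp - x), xp - x⟫ + ⟪f' x, xp - x⟫ ≤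
        g z + (1 / 2) * ⟪Q (z - x), z - x⟫ + ⟪f' x, z - x⟫) :
    (ν - β) * ⟪Q (xp - x), xp - x⟫ ≤
      2 * ν * ((f x + g x) - (f xp + g xp)) := by
  set d := xp - x
  set s := ⟪Q d, d⟫
  have hg : g xp + (1 / 2) * s + ⟪f' x, d⟫ ≤ g x := by simpa using hmin x
  have hdescent : f xp ≤ f x + ⟪f' x, d⟫ + β / ν * s / 2 := by
    have := le_add_inner_add_half_of_inner_gradient_sub_le hf fun t ht =>
      inner_gradient_sub_le_of_cocoercive hQsym hQpos hν hνQ hβ hranf' hcoco x d ht.1.le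
    rwa [add_sub_cancel] at this
  have hdecrease : 1 / 2 * s - β / ν * s / 2 ≤ (f x + g x) - (f xp + g xp) := by linarith
  calc (ν - β) * s = 2 * ν * (1 / 2 * s - β / ν * s / 2) := by field_simp
    _ ≤ 2 * ν * ((f x + g x) - (f xp + g xp)) :=
        mul_le_mul_of_nonneg_left hdecrease (by positivity)
end

section
/- Lemma 3.6(ii) (degenerate sufficient decrease with convex g): Let g : H → ℝ, let x, x⁺ ∈ H, and let u ∈ H be a subgradient of g at x⁺ in the sense that g(z) ≥ g(x⁺) + ⟪u, z − x⁺⟫ for all z ∈ H, such that 0 = ∇f(x) + u + Q(x⁺ − x). Then, writing h := f + g, one has 2ν · (h(x) − h(x⁺)) ≥ (2ν − β) · ⟪Q(x⁺ − x), x⁺ − x⟫; i.e. h(x) − h(x⁺) ≥ (1 − β/(2ν)) ‖x⁺ − x‖_Q². -/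
/-!
Write `w = x⁺ - x`. Since `∇f` takes values in the range of `Q`, each difference
`d = ∇f y - ∇f x` equals `Q e` with `e ⊥ ker Q`, so `ν ‖e‖ ≤ ‖d‖`; combining this with
cocoercivity and the Cauchy–Schwarz inequality for the form `⟪Q ·, ·⟫` shows that `∇f` is
`β / ν`-Lipschitz along the segment in the `Q`-seminorm. The descent lemma then gives
`f x⁺ ≤ f x + ⟪∇f x, w⟫ + β / (2ν) ‖w‖_Q²`, while the subgradient inequality at `x`, with
`u = -∇f x - Q w`, gives `g x⁺ + ⟪∇f x, w⟫ + ‖w‖_Q² ≤ g x`. Adding the two yields the claim.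
-/

open RealInnerProductSpace

section PositiveOperator

variable {H : Type*} [NormedAddCommGroup H] [InnerProductSpace ℝ H] (Q : H →L[ℝ] H)

theorem inner_apply_sq_le_of_symm_of_nonneg (hQsym : ∀ x y : H, ⟪Q x, y⟫ = ⟪x, Q y⟫)
    (hQpos : ∀ x : H, 0 ≤ ⟪Q x, x⟫) (a b : H) :
    ⟪Q a, b⟫ ^ 2 ≤ ⟪Q a, a⟫ * ⟪Q b, b⟫ := by
  have hQba : ⟪Q b, a⟫ = ⟪Q a, b⟫ := by rw [hQsym, real_inner_comm]
  have hquad : ∀ r : ℝ, 0 ≤ ⟪Q b, b⟫ * (r * r) + (2 * ⟪Q a, b⟫) * r + ⟪Q a, a⟫ := by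
    intro r
    convert hQpos (a + r • b) using 1
    simp only [map_add, map_smul, inner_add_left, inner_add_right, inner_smul_left,
      inner_smul_right, hQba, RCLike.conj_to_real]
    ring
  have hdisc := discrim_le_zero hquad
  rw [discrim] at hdisc
  nlinarith

theorem exists_mem_orthogonal_ker_apply_eq [CompleteSpace H] (a : H) :
    ∃ e ∈ (LinearMap.ker (Q : H →ₗ[ℝ] H))ᗮ, Q e = Q a := by
  have : CompleteSpace (LinearMap.ker (Q : H →ₗ[ℝ] H)) :=
    (ContinuousLinearMap.isClosed_ker Q).completeSpace_coe
  obtain ⟨k, hk, e, he, rfl⟩ :=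
    (LinearMap.ker (Q : H →ₗ[ℝ] H)).exists_add_mem_mem_orthogonal a
  refine ⟨e, he, ?_⟩
  rw [map_add, show Q k = 0 from hk, zero_add]

theorem mul_inner_apply_le_of_sq_norm_le [CompleteSpace H]
    (hQsym : ∀ x y : H, ⟪Q x, y⟫ = ⟪x, Q y⟫) (hQpos : ∀ x : H, 0 ≤ ⟪Q x, x⟫)
    {ν β : ℝ} (hν : 0 < ν) (hβ : 0 ≤ β)
    (hνQ : ∀ w ∈ (LinearMap.ker (Q : H →ₗ[ℝ] H))ᗮ, ν * ‖w‖ ≤ ‖Q w‖) {a v : H}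
    (hcoco : ‖Q a‖ ^ 2 ≤ β * ⟪Q a, v⟫) :
    ν * ⟪Q a, v⟫ ≤ β * ⟪Q v, v⟫ := by
  obtain ⟨e, he, hQe⟩ := exists_mem_orthogonal_ker_apply_eq Q a
  rw [← hQe] at hcoco ⊢
  have hnorm : ν * ⟪Q e, e⟫ ≤ β * ⟪Q e, v⟫ := by
    have := real_inner_le_norm (Q e) e
    nlinarith [hνQ e he, norm_nonneg (Q e)]
  have hCS := inner_apply_sq_le_of_symm_of_nonneg Q hQsym hQpos e v
  have hsq : ν * ⟪Q e, v⟫ ^ 2 ≤ β * ⟪Q e, v⟫ * ⟪Q v, v⟫ := by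
    nlinarith [hQpos v]
  rcases le_or_gt ⟪Q e, v⟫ 0 with hs | hs
  · nlinarith [hQpos v]
  · nlinarith

end PositiveOperator

theorem le_add_inner_add_half_of_inner_sub_le {H : Type*} [NormedAddCommGroup H]
    [InnerProductSpace ℝ H] [CompleteSpace H] {f : H → ℝ} {f' : H → H}
    (hf : ∀ x : H, HasGradientAt f (f' x) x)
    {x v : H} {M : ℝ} (hM : ∀ t ∈ Set.Ioo (0 : ℝ) 1, ⟪f' (x + t • v) - f' x, v⟫ ≤ t * M) :
    f (x + v) ≤ f x + ⟪f' x, v⟫ + M / 2 := by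
  set ψ : ℝ → ℝ := fun t => f (x + t • v) - t * ⟪f' x, v⟫ - M / 2 * t ^ 2
  have hψ : ∀ t : ℝ, HasDerivAt ψ (⟪f' (x + t • v), v⟫ - ⟪f' x, v⟫ - M * t) t := by
    intro t
    have hline : HasDerivAt (fun t : ℝ => x + t • v) v t := by
      simpa using ((hasDerivAt_id t).smul_const v).const_add x
    have hfline : HasDerivAt (fun t : ℝ => f (x + t • v)) ⟪f' (x + t • v), v⟫ t :=
      ((hf (x + t • v)).hasFDerivAt.comp_hasDerivAt t hline :)
    exact ((hfline.sub ((hasDerivAt_id t).mul_const ⟪f' x, v⟫)).sub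
      ((hasDerivAt_pow 2 t).const_mul (M / 2))).congr_deriv (by norm_num; ring)
  have hanti : AntitoneOn ψ (Set.Icc 0 1) := by
    refine antitoneOn_of_deriv_nonpos (convex_Icc 0 1)
      (fun t _ => (hψ t).continuousAt.continuousWithinAt)
      (fun t _ => (hψ t).differentiableAt.differentiableWithinAt) fun t ht => ?_
    rw [interior_Icc] at ht
    rw [(hψ t).deriv]
    have := hM t ht
    rw [inner_sub_left] at this
    linarith
  have h10 := hanti (by norm_num) (by norm_num) zero_le_one
  simp only [ψ, one_smul, zero_smul, add_zero] at h10
  linarith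

/-- Lemma 3.6(ii): degenerate sufficient decrease property, with convex `g`. -/
theorem stmt_17
    {H : Type*} [NormedAddCommGroup H] [InnerProductSpace ℝ H] [CompleteSpace H]
    (Q : H →L[ℝ] H)
    (hQsym : ∀ x y : H, ⟪Q x, y⟫ = ⟪x, Q y⟫)
    (hQpos : ∀ x : H, 0 ≤ ⟪Q x, x⟫)
    (ν : ℝ) (hν : 0 < ν)
    (hνQ : ∀ w ∈ (LinearMap.ker (Q : H →ₗ[ℝ] H))ᗮ, ν * ‖w‖ ≤ ‖Q w‖)
    (β : ℝ) (hβ : 0 ≤ β)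
    (f : H → ℝ) (f' : H → H)
    (hf : ∀ x : H, HasGradientAt f (f' x) x)
    (hranf' : Set.range f' ⊆ Set.range Q)
    (hcoco : ∀ x y : H, ‖f' x - f' y‖ ^ 2 ≤ β * ⟪f' x - f' y, x - y⟫)
    (g : H → ℝ) (x xp u : H)
    (hsub : ∀ z : H, g xp + ⟪u, z - xp⟫ ≤ g z)
    (hopt : 0 = f' x + u + Q (xp - x)) :
    (2 * ν - β) * ⟪Q (xp - x), xp - x⟫ ≤
      2 * ν * ((f x + g x) - (f xp + g xp)) := by
  set w := xp - x
  have hlip : ∀ t ∈ Set.Ioo (0 : ℝ) 1,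
      ⟪f' (x + t • w) - f' x, w⟫ ≤ t * (β * ⟪Q w, w⟫ / ν) := by
    rintro t ⟨ht, -⟩
    obtain ⟨a₁, ha₁⟩ := hranf' ⟨x + t • w, rfl⟩
    obtain ⟨a₂, ha₂⟩ := hranf' ⟨x, rfl⟩
    have hd : Q (a₁ - a₂) = f' (x + t • w) - f' x := by rw [map_sub, ha₁, ha₂]
    have hcoco' := hcoco (x + t • w) x
    rw [add_sub_cancel_left, ← hd] at hcoco'
    have := mul_inner_apply_le_of_sq_norm_le Q hQsym hQpos hν hβ hνQ hcoco'
    simp only [hd, map_smul, inner_smul_left, inner_smul_right, RCLike.conj_to_real] at this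
    rw [mul_div_assoc', le_div_iff₀ hν]
    nlinarith
  have hf_desc := le_add_inner_add_half_of_inner_sub_le hf hlip
  rw [add_sub_cancel] at hf_desc
  have hu : u = -f' x - Q w := by linear_combination (norm := module) -hopt
  have hg_desc := hsub x
  rw [hu, ← neg_sub xp x, inner_neg_right, inner_sub_left, inner_neg_left] at hg_desc
  have hC : 2 * ν * (β * ⟪Q w, w⟫ / ν / 2) = β * ⟪Q w, w⟫ := by field_simp
  nlinarith
end
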